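/- Let R = ℚ[L, M, s, x, y] be the polynomial ring in five variables, and let D : R → R be the unique ℚ-linear derivation with D(L) = L·y, D(M) = M·s, D(s) = x·y, D(x) = x·y, D(y) = x·y. Then for every n ≥ 0, the n-th iterate satisfies Dⁿ(L·M) = L·M·A_{n+1}(x,y,s), where A_{n+1}(x,y,s) = Σ_{π ∈ S_{n+1}} x^{basc(π)} y^{des(π)} s^{suc(π)}. -/

import Mathlib

/-!
The monomial `x^{basc π} y^{des π} s^{suc π}` is the product, over the adjacent pairs of `π`, of
`y`, `s` or `x` according as the pair is a descent, a succession or a big ascent. As `D` sends each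
of `s`, `x`, `y` to `xy`, the Leibniz rule makes `D` of such a product the sum, over the pairs, of
the product with that pair's factor replaced by `xy`.

Every permutation of `[m + 1]` arises exactly once by inserting `m + 1` into a permutation of `[m]`.
Reading the end of the word as one more pair `(π(m), 0)`, always a descent, inserting `m + 1` into
a pair `(a, b)` replaces its factor by `xy`, or by `sy` when `a = m`, and inserting it in front adds
a factor `y`. Summing gives `A_{m+2} = (s + y) A_{m+1} + D A_{m+1}`; since `D(LM) = (s + y) LM`,
induction on `n` follows.
-/

open Finset MvPolynomial

/-- The word `π(1)π(2)⋯π(n)` of a permutation, as a function on 0-based positions. -/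
def permWord {n : ℕ} (π : Equiv.Perm (Fin n)) (i : ℕ) : ℕ :=
  if h : i < n then ((π ⟨i, h⟩ : Fin n) : ℕ) + 1 else 0

/-- Number of descents. -/
def desNum {n : ℕ} (π : Equiv.Perm (Fin n)) : ℕ :=
  ((range (n - 1)).filter fun i => permWord π (i + 1) < permWord π i).card

/-- Number of big ascents. -/
def bascNum {n : ℕ} (π : Equiv.Perm (Fin n)) : ℕ :=
  ((range (n - 1)).filter fun i => permWord π i + 2 ≤ permWord π (i + 1)).card

/-- Number of successions. -/
def sucNum {n : ℕ} (π : Equiv.Perm (Fin n)) : ℕ :=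
  ((range (n - 1)).filter fun i => permWord π (i + 1) = permWord π i + 1).card

/-- In `R = ℚ[L,M,s,x,y]` with `L = X 0`, `M = X 1`, `s = X 2`, `x = X 3`, `y = X 4`:
the trivariate Eulerian polynomial `A_m(x,y,s) = Σ_{π ∈ S_m} x^{basc π} y^{des π} s^{suc π}`. -/
noncomputable def trivEuler (m : ℕ) : MvPolynomial (Fin 5) ℚ :=
  ∑ π : Equiv.Perm (Fin m), X 3 ^ bascNum π * X 4 ^ desNum π * X 2 ^ sucNum π

theorem Derivation.leibniz_prod {R A M ι : Type*} [CommSemiring R] [CommSemiring A]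
    [AddCommMonoid M] [Algebra R A] [Module A M] [Module R M] [DecidableEq ι]
    (D : Derivation R A M) (s : Finset ι) (f : ι → A) :
    D (∏ i ∈ s, f i) = ∑ i ∈ s, (∏ j ∈ s.erase i, f j) • D (f i) := by
  induction s using Finset.induction_on with
  | empty => simp
  | insert a s ha ih =>
    rw [prod_insert ha, D.leibniz, ih, sum_insert ha, erase_insert ha, smul_sum, add_comm]
    congr 1
    refine sum_congr rfl fun i hi => ?_
    rw [erase_insert_of_ne (ne_of_mem_of_not_mem hi ha).symm,
      prod_insert (mt mem_of_mem_erase ha), mul_smul]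

theorem Finset.pow_card_filter {M ι : Type*} [CommMonoid M] (r : M) (s : Finset ι)
    (p : ι → Prop) [DecidablePred p] :
    r ^ (s.filter p).card = ∏ i ∈ s, if p i then r else 1 := by
  rw [← prod_const, prod_filter]

namespace TrivEuler

abbrev R : Type := MvPolynomial (Fin 5) ℚ

lemma permWord_succ_ne {n : ℕ} (π : Equiv.Perm (Fin n)) {i : ℕ} (hi : i + 1 < n) :
    permWord π (i + 1) ≠ permWord π i := by
  simp only [permWord, dif_pos hi, dif_pos (Nat.lt_of_succ_lt hi), ne_eq, add_left_inj,
    Fin.val_inj, π.injective.eq_iff, Fin.mk.injEq]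
  omega

lemma permWord_pos {n : ℕ} (π : Equiv.Perm (Fin n)) {i : ℕ} (hi : i < n) :
    0 < permWord π i := by
  simp [permWord, hi]

lemma permWord_le {n : ℕ} (π : Equiv.Perm (Fin n)) (i : ℕ) : permWord π i ≤ n := by
  unfold permWord; split_ifs <;> omega

lemma permWord_of_le {n : ℕ} (π : Equiv.Perm (Fin n)) {i : ℕ} (hi : n ≤ i) :
    permWord π i = 0 :=
  dif_neg (by omega)

lemma exists_permWord_eq_top {n : ℕ} (π : Equiv.Perm (Fin (n + 1))) :
    ∃ j₀ < n + 1, ∀ j < n + 1, permWord π j = n + 1 ↔ j = j₀ := by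
  refine ⟨π.symm (Fin.last n), (π.symm (Fin.last n)).isLt, fun j hj => ?_⟩
  have hlast : (π ⟨j, hj⟩ : ℕ) = n ↔ π ⟨j, hj⟩ = Fin.last n := by
    rw [Fin.ext_iff, Fin.val_last]
  rw [permWord, dif_pos hj, add_left_inj, hlast, ← Equiv.eq_symm_apply, Fin.ext_iff]

lemma permWord_succ_le_of_eq_top {n : ℕ} (π : Equiv.Perm (Fin (n + 1))) {j : ℕ}
    (hj : permWord π j = n + 1) : permWord π (j + 1) ≤ n := by
  rcases lt_or_ge (j + 1) (n + 1) with h | h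
  · have := permWord_le π (j + 1)
    have := permWord_succ_ne π h
    omega
  · rw [permWord_of_le π h]
    omega

noncomputable def pairWeight (a b : ℕ) : R :=
  if b < a then X 4 else if b = a + 1 then X 2 else X 3

noncomputable def wordWeight (w : ℕ → ℕ) (k : ℕ) : R :=
  ∏ i ∈ range k, pairWeight (w i) (w (i + 1))

lemma pairWeight_ne_zero (a b : ℕ) : pairWeight a b ≠ 0 := by
  unfold pairWeight; split_ifs <;> exact X_ne_zero _

lemma pairWeight_of_lt {a b : ℕ} (h : b < a) : pairWeight a b = X 4 :=
  if_pos h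

lemma pairWeight_succ_of_le {n a : ℕ} (ha : a ≤ n) :
    pairWeight a (n + 1) = if a = n then X 2 else X 3 := by
  unfold pairWeight
  split_ifs <;> first | rfl | omega

lemma derivation_pairWeight (D : Derivation ℚ R R)
    (hs : D (X 2) = X 3 * X 4) (hx : D (X 3) = X 3 * X 4) (hy : D (X 4) = X 3 * X 4)
    (a b : ℕ) : D (pairWeight a b) = X 3 * X 4 := by
  unfold pairWeight; split_ifs <;> assumption

lemma trivEuler_eq_sum_wordWeight (n : ℕ) :
    trivEuler n = ∑ π : Equiv.Perm (Fin n), wordWeight (permWord π) (n - 1) := by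
  refine sum_congr rfl fun π _ => ?_
  rw [bascNum, desNum, sucNum, pow_card_filter, pow_card_filter, pow_card_filter,
    ← prod_mul_distrib, ← prod_mul_distrib, wordWeight]
  refine prod_congr rfl fun i hi => ?_
  have hne := permWord_succ_ne π (i := i) (by have := mem_range.1 hi; omega)
  unfold pairWeight
  split_ifs <;> first | omega | simp

lemma wordWeight_permWord_succ {n : ℕ} (π : Equiv.Perm (Fin (n + 1))) :
    wordWeight (permWord π) (n + 1) = wordWeight (permWord π) n * X 4 := by
  rw [wordWeight, prod_range_succ, permWord_of_le π le_rfl,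
    pairWeight_of_lt (permWord_pos π (Nat.lt_succ_self n))]
  rfl

noncomputable def wordWeightExcept (w : ℕ → ℕ) (k j : ℕ) : R :=
  ∏ i ∈ (range k).erase j, pairWeight (w i) (w (i + 1))

lemma pairWeight_mul_wordWeightExcept (w : ℕ → ℕ) {k j : ℕ} (hj : j < k) :
    pairWeight (w j) (w (j + 1)) * wordWeightExcept w k j = wordWeight w k :=
  mul_prod_erase _ (fun i => pairWeight (w i) (w (i + 1))) (mem_range.2 hj)

def insertAt (w : ℕ → ℕ) (p v : ℕ) (i : ℕ) : ℕ :=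
  if i < p then w i else if i = p then v else w (i - 1)

lemma wordWeight_insertAt_zero (w : ℕ → ℕ) (v m : ℕ) :
    wordWeight (insertAt w 0 v) (m + 1) = pairWeight v (w 0) * wordWeight w m := by
  simp [wordWeight, insertAt, prod_range_succ', mul_comm]

lemma wordWeight_insertAt_succ (w : ℕ → ℕ) (v : ℕ) {m j : ℕ} (hj : j < m) :
    wordWeight (insertAt w (j + 1) v) (m + 1) =
      pairWeight (w j) v * pairWeight v (w (j + 1)) * wordWeightExcept w m j := by
  apply mul_left_cancel₀ (pairWeight_ne_zero (w j) (w (j + 1)))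
  rw [mul_left_comm, pairWeight_mul_wordWeightExcept w hj]
  obtain ⟨r, rfl⟩ := Nat.exists_eq_add_of_lt hj
  have hpre :
      ∏ i ∈ range j, pairWeight (insertAt w (j + 1) v i) (insertAt w (j + 1) v (i + 1)) =
      ∏ i ∈ range j, pairWeight (w i) (w (i + 1)) :=
    prod_congr rfl fun i hi => by
      simp only [mem_range] at hi
      simp only [insertAt, if_pos (show i < j + 1 by omega),
        if_pos (show i + 1 < j + 1 by omega)]
  have hpost : ∀ x, pairWeight (insertAt w (j + 1) v (j + 2 + x))
      (insertAt w (j + 1) v (j + 2 + x + 1)) = pairWeight (w (j + 1 + x)) (w (j + 1 + x + 1)) :=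
    fun x => by
      simp only [insertAt, if_neg (show ¬ j + 2 + x < j + 1 by omega),
        if_neg (show ¬ j + 2 + x + 1 < j + 1 by omega), if_neg (show j + 2 + x ≠ j + 1 by omega),
        if_neg (show j + 2 + x + 1 ≠ j + 1 by omega)]
      congr 2 <;> omega
  have hins : wordWeight (insertAt w (j + 1) v) (j + r + 1 + 1) =
      (∏ i ∈ range j, pairWeight (w i) (w (i + 1))) * pairWeight (w j) v *
        pairWeight v (w (j + 1)) *
          ∏ x ∈ range r, pairWeight (w (j + 1 + x)) (w (j + 1 + x + 1)) := by
    rw [wordWeight, show j + r + 1 + 1 = j + 2 + r by omega, prod_range_add, prod_range_succ,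
      prod_range_succ, hpre]
    simp only [hpost]
    simp only [insertAt, lt_add_one, if_true, lt_irrefl, if_false, Nat.add_sub_cancel,
      show ¬ j + 1 + 1 < j + 1 by omega, show j + 1 + 1 ≠ j + 1 by omega]
  have hw : ∏ i ∈ range (j + r + 1), pairWeight (w i) (w (i + 1)) =
      (∏ i ∈ range j, pairWeight (w i) (w (i + 1))) * pairWeight (w j) (w (j + 1)) *
        ∏ x ∈ range r, pairWeight (w (j + 1 + x)) (w (j + 1 + x + 1)) := by
    rw [show j + r + 1 = j + 1 + r by omega, prod_range_add, prod_range_succ]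
  rw [hins, wordWeight, hw]
  ring

def insertMax {m : ℕ} (σ : Equiv.Perm (Fin m)) (p : Fin (m + 1)) : Equiv.Perm (Fin (m + 1)) :=
  (finSuccEquiv' p).trans ((Equiv.optionCongr σ).trans (finSuccEquiv' (Fin.last m)).symm)

lemma insertMax_self {m : ℕ} (σ : Equiv.Perm (Fin m)) (p : Fin (m + 1)) :
    insertMax σ p p = Fin.last m := by
  simp [insertMax, finSuccEquiv'_at, finSuccEquiv'_symm_none]

lemma insertMax_succAbove {m : ℕ} (σ : Equiv.Perm (Fin m)) (p : Fin (m + 1)) (j : Fin m) :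
    insertMax σ p (p.succAbove j) = (σ j).castSucc := by
  simp [insertMax, finSuccEquiv'_succAbove, finSuccEquiv'_symm_some, Fin.succAbove_last]

lemma permWord_insertMax {m : ℕ} (σ : Equiv.Perm (Fin m)) (p : Fin (m + 1)) :
    permWord (insertMax σ p) = insertAt (permWord σ) p (m + 1) := by
  funext i
  by_cases hi : i < m + 1
  · rcases eq_or_ne (⟨i, hi⟩ : Fin (m + 1)) p with rfl | hne
    · simp [permWord, insertAt, insertMax_self, Nat.lt_succ_iff.1 hi]
    obtain ⟨j, hj⟩ := Fin.exists_succAbove_eq hne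
    have hval : permWord (insertMax σ p) i = permWord σ j := by
      simp [permWord, hi, ← hj, insertMax_succAbove]
    rw [hval, insertAt]
    by_cases hjp : j.castSucc < p
    · rw [Fin.succAbove_of_castSucc_lt _ _ hjp, Fin.ext_iff] at hj
      simp only [Fin.val_castSucc] at hj
      subst hj
      rw [if_pos (show (j : ℕ) < p from hjp)]
    · rw [Fin.succAbove_of_le_castSucc _ _ (not_lt.1 hjp), Fin.ext_iff] at hj
      simp only [Fin.val_succ] at hj
      subst hj
      rw [Fin.lt_def, Fin.val_castSucc] at hjp
      rw [if_neg (by omega), if_neg (by omega), Nat.add_sub_cancel]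
  · simp [permWord, insertAt, hi, show ¬ i - 1 < m by omega, show ¬ i < p by omega,
      show i ≠ p by omega]

lemma insertMax_injective (m : ℕ) :
    Function.Injective fun x : Equiv.Perm (Fin m) × Fin (m + 1) => insertMax x.1 x.2 := by
  rintro ⟨σ, p⟩ ⟨σ', p'⟩ h
  simp only at h
  obtain rfl : p = p' := (insertMax σ p).injective <| by
    rw [insertMax_self, h, insertMax_self]
  obtain rfl : σ = σ' := Equiv.ext fun j => Fin.castSucc_injective m <| by
    rw [← insertMax_succAbove, ← insertMax_succAbove, h]
  rfl

lemma sum_perm_succ_eq_sum_insertMax {M : Type*} [AddCommMonoid M] {m : ℕ}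
    (f : Equiv.Perm (Fin (m + 1)) → M) :
    ∑ τ, f τ = ∑ σ : Equiv.Perm (Fin m), ∑ p, f (insertMax σ p) := by
  have hbij :
      Function.Bijective fun x : Equiv.Perm (Fin m) × Fin (m + 1) => insertMax x.1 x.2 := by
    rw [Fintype.bijective_iff_injective_and_card]
    refine ⟨insertMax_injective m, ?_⟩
    simp [Fintype.card_perm, Nat.factorial_succ, mul_comm]
  rw [← Fintype.sum_prod_type']
  exact (Fintype.sum_bijective _ hbij _ _ fun _ => rfl).symm

lemma derivation_wordWeight (D : Derivation ℚ R R)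
    (hs : D (X 2) = X 3 * X 4) (hx : D (X 3) = X 3 * X 4) (hy : D (X 4) = X 3 * X 4)
    (w : ℕ → ℕ) (n : ℕ) :
    D (wordWeight w n) = ∑ j ∈ range n, X 3 * X 4 * wordWeightExcept w n j := by
  rw [wordWeight, D.leibniz_prod]
  simp only [derivation_pairWeight D hs hx hy, smul_eq_mul, mul_comm, wordWeightExcept]

lemma sum_wordWeight_insertAt (D : Derivation ℚ R R)
    (hs : D (X 2) = X 3 * X 4) (hx : D (X 3) = X 3 * X 4) (hy : D (X 4) = X 3 * X 4)
    {k : ℕ} (σ : Equiv.Perm (Fin (k + 1))) :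
    ∑ p : Fin (k + 2), wordWeight (insertAt (permWord σ) p (k + 2)) (k + 2) =
      X 4 * wordWeight (permWord σ) (k + 1) + D (wordWeight (permWord σ) (k + 1)) +
        (X 2 - X 3) * wordWeight (permWord σ) (k + 1) := by
  obtain ⟨j₀, hj₀, hmax⟩ := exists_permWord_eq_top σ
  have htop : permWord σ j₀ = k + 1 := (hmax j₀ hj₀).2 rfl
  have hQ :
      X 4 * wordWeightExcept (permWord σ) (k + 1) j₀ = wordWeight (permWord σ) (k + 1) := by
    have hnext := permWord_succ_le_of_eq_top σ htop
    rw [← pairWeight_mul_wordWeightExcept _ hj₀, pairWeight_of_lt (by omega)]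
  have hfront : wordWeight (insertAt (permWord σ) 0 (k + 2)) (k + 2) =
      X 4 * wordWeight (permWord σ) (k + 1) := by
    rw [wordWeight_insertAt_zero, pairWeight_of_lt (Nat.lt_succ_of_le (permWord_le σ 0))]
  have hslot : ∀ j ∈ range (k + 1),
      wordWeight (insertAt (permWord σ) (j + 1) (k + 2)) (k + 2) =
      X 3 * X 4 * wordWeightExcept (permWord σ) (k + 1) j +
        if j = j₀ then (X 2 - X 3) * (X 4 * wordWeightExcept (permWord σ) (k + 1) j) else 0 := by
    intro j hj
    rw [wordWeight_insertAt_succ _ _ (mem_range.1 hj),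
      pairWeight_of_lt (Nat.lt_succ_of_le (permWord_le σ _)),
      pairWeight_succ_of_le (permWord_le σ _)]
    simp only [hmax j (mem_range.1 hj)]
    split_ifs <;> ring
  rw [Fin.sum_univ_succ]
  simp only [Fin.val_zero, Fin.val_succ, hfront]
  rw [Fin.sum_univ_eq_sum_range
      (fun j => wordWeight (insertAt (permWord σ) (j + 1) (k + 2)) (k + 2)),
    sum_congr rfl hslot, sum_add_distrib, sum_ite_eq' _ j₀, if_pos (mem_range.2 hj₀), hQ,
    derivation_wordWeight D hs hx hy]
  ring

lemma sum_wordWeight_insertMax (D : Derivation ℚ R R)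
    (hs : D (X 2) = X 3 * X 4) (hx : D (X 3) = X 3 * X 4) (hy : D (X 4) = X 3 * X 4)
    {k : ℕ} (σ : Equiv.Perm (Fin (k + 1))) :
    ∑ p, wordWeight (permWord (insertMax σ p)) (k + 1) =
      (X 2 + X 4) * wordWeight (permWord σ) k + D (wordWeight (permWord σ) k) := by
  apply mul_right_cancel₀ (X_ne_zero 4 : (X 4 : R) ≠ 0)
  have hsentinel := sum_wordWeight_insertAt D hs hx hy σ
  simp only [← permWord_insertMax, wordWeight_permWord_succ, ← sum_mul] at hsentinel
  rw [hsentinel, D.leibniz, hy, smul_eq_mul, smul_eq_mul]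
  ring

lemma trivEuler_add_two (D : Derivation ℚ R R)
    (hs : D (X 2) = X 3 * X 4) (hx : D (X 3) = X 3 * X 4) (hy : D (X 4) = X 3 * X 4) (k : ℕ) :
    trivEuler (k + 2) = (X 2 + X 4) * trivEuler (k + 1) + D (trivEuler (k + 1)) := by
  rw [trivEuler_eq_sum_wordWeight, trivEuler_eq_sum_wordWeight, sum_perm_succ_eq_sum_insertMax,
    map_sum, mul_sum, ← sum_add_distrib]
  exact sum_congr rfl fun σ _ => sum_wordWeight_insertMax D hs hx hy σ

lemma trivEuler_one : trivEuler 1 = 1 := by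
  simp [trivEuler_eq_sum_wordWeight, wordWeight]

end TrivEuler

open TrivEuler

/-- If `D` is the ℚ-linear derivation of `ℚ[L,M,s,x,y]` with `D(L) = Ly`, `D(M) = Ms`,
`D(s) = xy`, `D(x) = xy`, `D(y) = xy`, then `Dⁿ(LM) = LM·A_{n+1}(x,y,s)` for all `n ≥ 0`. -/
theorem stmt8
    (D : Derivation ℚ (MvPolynomial (Fin 5) ℚ) (MvPolynomial (Fin 5) ℚ))
    (hL : D (X 0) = X 0 * X 4) (hM : D (X 1) = X 1 * X 2)
    (hs : D (X 2) = X 3 * X 4) (hx : D (X 3) = X 3 * X 4) (hy : D (X 4) = X 3 * X 4)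
    (n : ℕ) :
    (⇑D)^[n] (X 0 * X 1) = X 0 * X 1 * trivEuler (n + 1) := by
  induction n with
  | zero => rw [trivEuler_one, mul_one, Function.iterate_zero_apply]
  | succ n ih =>
    rw [Function.iterate_succ_apply', ih, trivEuler_add_two D hs hx hy, D.leibniz, D.leibniz,
      hL, hM, smul_eq_mul, smul_eq_mul, smul_eq_mul, smul_eq_mul]
    ring
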